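/- arXiv:2307.06987 — 2 statements merged into one kernel-verified Lean document; each statement's English description precedes it below -/
import Mathlib

section
/- Let F : ℝᴺ → ℝ be differentiable, coercive, and bounded below with β-Lipschitz gradient, and let (x_k) be generated by gradient descent x_{k+1} = x_k − α∇F(x_k) with 0 < α < 2/β. Then ∑_{k=0}^∞ ‖∇F(x_k)‖² < ∞ and ∇F(x_k) → 0. -/
/-!
Along the segment `t ↦ x + t • d`, the Lipschitz bound on the gradient makes the directional
derivative grow at most linearly, which gives the descent lemma
`F (x + d) ≤ F x + ⟪∇F x, d⟫ + β/2 ‖d‖²`. For the step `d = -α ∇F x` this says that each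
iteration lowers `F` by at least `α (1 - αβ/2) ‖∇F x‖²`, a positive multiple of the squared
gradient when `α < 2/β`. Telescoping against `inf F` bounds the partial sums of `‖∇F (x k)‖²`,
so the series converges and its terms tend to zero.
-/

open Filter RealInnerProductSpace

section DescentLemma

variable {E : Type*} [NormedAddCommGroup E] [InnerProductSpace ℝ E] [CompleteSpace E]
  {F : E → ℝ} {β : ℝ}

theorem hasDerivAt_comp_add_smul (hF : Differentiable ℝ F) (x d : E) (t : ℝ) :
    HasDerivAt (fun s : ℝ => F (x + s • d)) ⟪gradient F (x + t • d), d⟫ t := by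
  have hline : HasDerivAt (fun s : ℝ => x + s • d) d t := by
    simpa using ((hasDerivAt_id t).smul_const d).const_add x
  simpa [InnerProductSpace.toDual_apply_apply, Function.comp_def] using
    (hF (x + t • d)).hasGradientAt.hasFDerivAt.comp_hasDerivAt t hline

theorem inner_gradient_add_smul_sub_le
    (hlip : ∀ x y, ‖gradient F x - gradient F y‖ ≤ β * ‖x - y‖)
    (x d : E) {t : ℝ} (ht : 0 ≤ t) :
    ⟪gradient F (x + t • d) - gradient F x, d⟫ ≤ β * t * ‖d‖ ^ 2 :=
  calc ⟪gradient F (x + t • d) - gradient F x, d⟫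
      ≤ ‖gradient F (x + t • d) - gradient F x‖ * ‖d‖ := real_inner_le_norm _ _
    _ ≤ β * ‖(x + t • d) - x‖ * ‖d‖ := by gcongr; exact hlip _ _
    _ = β * t * ‖d‖ ^ 2 := by
      rw [add_sub_cancel_left, norm_smul, Real.norm_of_nonneg ht]; ring

theorem le_add_inner_gradient_add_sq_norm (hF : Differentiable ℝ F)
    (hlip : ∀ x y, ‖gradient F x - gradient F y‖ ≤ β * ‖x - y‖) (x d : E) :
    F (x + d) ≤ F x + ⟪gradient F x, d⟫ + β / 2 * ‖d‖ ^ 2 := by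
  set gap : ℝ → ℝ := fun t =>
    F x + t * ⟪gradient F x, d⟫ + β / 2 * ‖d‖ ^ 2 * t ^ 2 - F (x + t • d)
  have hgap : ∀ t, HasDerivAt gap (⟪gradient F x, d⟫ + β / 2 * ‖d‖ ^ 2 * (2 * t)
      - ⟪gradient F (x + t • d), d⟫) t := fun t => by
    have hquad := (((hasDerivAt_id t).mul_const ⟪gradient F x, d⟫).const_add (F x)).add
      ((hasDerivAt_pow 2 t).const_mul (β / 2 * ‖d‖ ^ 2))
    exact (hquad.sub (hasDerivAt_comp_add_smul hF x d t)).congr_deriv (by simp)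
  have hmono : MonotoneOn gap (Set.Icc 0 1) := by
    refine monotoneOn_of_hasDerivWithinAt_nonneg (convex_Icc 0 1)
      (fun t _ => (hgap t).continuousAt.continuousWithinAt)
      (fun t _ => (hgap t).hasDerivWithinAt) fun t ht => ?_
    rw [interior_Icc] at ht
    have := inner_gradient_add_smul_sub_le hlip x d ht.1.le
    rw [inner_sub_left] at this
    linarith
  have h01 := hmono (Set.left_mem_Icc.2 zero_le_one) (Set.right_mem_Icc.2 zero_le_one)
    zero_le_one
  simpa [gap] using h01

theorem le_sub_of_gradient_step (hF : Differentiable ℝ F)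
    (hlip : ∀ x y, ‖gradient F x - gradient F y‖ ≤ β * ‖x - y‖) (x : E) (α : ℝ) :
    F (x - α • gradient F x) ≤ F x - α * (1 - α * β / 2) * ‖gradient F x‖ ^ 2 := by
  have h := le_add_inner_gradient_add_sq_norm hF hlip x (-(α • gradient F x))
  rw [← sub_eq_add_neg, inner_neg_right, real_inner_smul_right, real_inner_self_eq_norm_sq,
    norm_neg, norm_smul, mul_pow, Real.norm_eq_abs, sq_abs] at h
  linarith

end DescentLemma

theorem summable_of_le_sub_of_bddBelow {u a : ℕ → ℝ} (ha : ∀ k, 0 ≤ a k)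
    (hu : ∀ k, u (k + 1) ≤ u k - a k) (hbdd : BddBelow (Set.range u)) : Summable a := by
  obtain ⟨m, hm⟩ := hbdd
  have hpartial : ∀ n, ∑ k ∈ Finset.range n, a k ≤ u 0 - u n := fun n => by
    induction n with
    | zero => simp
    | succ n ih => rw [Finset.sum_range_succ]; linarith [hu n]
  exact summable_of_sum_range_le (c := u 0 - m) ha fun n =>
    (hpartial n).trans (by linarith [hm ⟨n, rfl⟩])

theorem stmt6_general {N : ℕ} (F : EuclideanSpace ℝ (Fin N) → ℝ) (β α : ℝ) (hβ : 0 < β)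
    (hα : 0 < α) (hα2 : α < 2 / β) (hdiff : Differentiable ℝ F)
    (hlip : ∀ x y, ‖gradient F x - gradient F y‖ ≤ β * ‖x - y‖)
    (hbdd : BddBelow (Set.range F))
    (x : ℕ → EuclideanSpace ℝ (Fin N))
    (hx : ∀ k, x (k + 1) = x k - α • gradient F (x k)) :
    (Summable fun k => ‖gradient F (x k)‖ ^ 2) ∧
    Tendsto (fun k => gradient F (x k)) atTop (nhds 0) := by
  have hc : 0 < α * (1 - α * β / 2) := by
    have : α * β < 2 := (lt_div_iff₀ hβ).1 hα2
    nlinarith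
  have hstep : ∀ k, F (x (k + 1)) ≤ F (x k) - α * (1 - α * β / 2) * ‖gradient F (x k)‖ ^ 2 :=
    fun k => hx k ▸ le_sub_of_gradient_step hdiff hlip (x k) α
  have hsum : Summable fun k => ‖gradient F (x k)‖ ^ 2 :=
    (summable_mul_left_iff hc.ne').1 <| summable_of_le_sub_of_bddBelow (u := F ∘ x)
      (fun k => by positivity) (by simpa only [Function.comp_apply, mul_assoc] using hstep)
      (hbdd.mono (Set.range_comp_subset_range x F))
  refine ⟨hsum, tendsto_zero_iff_norm_tendsto_zero.2 ?_⟩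
  simpa [Real.sqrt_sq (norm_nonneg _)] using hsum.tendsto_atTop_zero.sqrt

theorem stmt6 {N : ℕ} (F : EuclideanSpace ℝ (Fin N) → ℝ) (β α : ℝ) (hβ : 0 < β)
    (hα : 0 < α) (hα2 : α < 2 / β) (hdiff : Differentiable ℝ F)
    (hlip : ∀ x y, ‖gradient F x - gradient F y‖ ≤ β * ‖x - y‖)
    (hcoercive : Tendsto F (cocompact _) atTop)
    (hbdd : BddBelow (Set.range F))
    (x : ℕ → EuclideanSpace ℝ (Fin N))
    (hx : ∀ k, x (k + 1) = x k - α • gradient F (x k)) :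
    (Summable fun k => ‖gradient F (x k)‖ ^ 2) ∧
    Tendsto (fun k => gradient F (x k)) atTop (nhds 0) :=
  stmt6_general F β α hβ hα hα2 hdiff hlip hbdd x hx
end

section
/- Let F : ℝᴺ → ℝ be differentiable with β-Lipschitz gradient and bounded below by F_min. Suppose x_{k+1} = x_k − α_k g_k where g_k is a random vector with E_k[g_k] = ∇F(x_k) and E_k[‖g_k‖²] ≤ a_k(F(x_k) − F_min) + b_k‖∇F(x_k)‖² + c_k. Then almost surely E_k[F(x_{k+1})] − F_min ≤ (1 + α_k²a_kβ/2)(F(x_k) − F_min) − α_k(1 − α_k b_k β/2)‖∇F(x_k)‖² + α_k²c_kβ/2. -/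
/-!
Along the segment `t ↦ x + t • v`, the function `F (x + t • v) - t ⟪∇F x, v⟫ - β/2 t² ‖v‖²`
has derivative `⟪∇F (x + t • v) - ∇F x, v⟫ - β t ‖v‖² ≤ 0`, which gives the descent lemma
`F (x + v) ≤ F x + ⟪∇F x, v⟫ + β/2 ‖v‖²`. Apply it at `x_{k+1} = x_k - α_k g_k` and condition on
`ℱ_k`: since `∇F (x_k)` is `ℱ_k`-measurable, the pull-out property and `E_k[g_k] = ∇F (x_k)` turn
the linear term into `-α_k ‖∇F (x_k)‖²`, and the quadratic term is bounded by the variance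
hypothesis. The descent lemma at `v = -∇F x / β` also gives `‖∇F x‖² ≤ 2β (F x - F_min)`, which
makes `⟪∇F (x_k), g_k⟫` integrable.
-/

open MeasureTheory
open scoped RealInnerProductSpace

section Smooth

variable {E : Type*} [NormedAddCommGroup E] [InnerProductSpace ℝ E] [CompleteSpace E]
  {F : E → ℝ} {β : ℝ}

theorem continuous_gradient_of_lipschitz
    (hlip : ∀ x y, ‖gradient F x - gradient F y‖ ≤ β * ‖x - y‖) :
    Continuous (gradient F) :=
  (LipschitzWith.of_dist_le' (K := β) (by simpa only [dist_eq_norm] using hlip)).continuous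

theorem le_add_inner_gradient_add_sq_of_lipschitz (hdiff : Differentiable ℝ F)
    (hlip : ∀ x y, ‖gradient F x - gradient F y‖ ≤ β * ‖x - y‖) (x v : E) :
    F (x + v) ≤ F x + ⟪gradient F x, v⟫ + β / 2 * ‖v‖ ^ 2 := by
  set φ : ℝ → ℝ := fun t => F (x + t • v) - t * ⟪gradient F x, v⟫ - β / 2 * t ^ 2 * ‖v‖ ^ 2
  set φ' : ℝ → ℝ := fun t => ⟪gradient F (x + t • v), v⟫ - ⟪gradient F x, v⟫ - β * t * ‖v‖ ^ 2
  have hφ : ∀ t, HasDerivAt φ (φ' t) t := by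
    intro t
    have hline : HasDerivAt (fun t : ℝ => x + t • v) v t := by
      simpa using ((hasDerivAt_id t).smul_const v).const_add x
    have hF := (hdiff (x + t • v)).hasGradientAt.hasFDerivAt.comp_hasDerivAt t hline
    simp only [InnerProductSpace.toDual_apply_apply] at hF
    refine ((hF.sub ((hasDerivAt_id t).mul_const ⟪gradient F x, v⟫)).sub
      (((hasDerivAt_pow 2 t).const_mul (β / 2)).mul_const (‖v‖ ^ 2))).congr_deriv ?_
    simp only [φ', Nat.cast_ofNat]; ring
  obtain ⟨c, ⟨hc0, -⟩, hc⟩ := exists_hasDerivAt_eq_slope φ φ' zero_lt_one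
    (fun t _ => (hφ t).continuousAt.continuousWithinAt) (fun t _ => hφ t)
  have hφ'c : φ' c ≤ 0 := by
    have hinner : ⟪gradient F (x + c • v) - gradient F x, v⟫ ≤ β * c * ‖v‖ ^ 2 := calc
      _ ≤ ‖gradient F (x + c • v) - gradient F x‖ * ‖v‖ := real_inner_le_norm _ _
      _ ≤ β * ‖c • v‖ * ‖v‖ := by gcongr; simpa using hlip (x + c • v) x
      _ = β * c * ‖v‖ ^ 2 := by rw [norm_smul, Real.norm_of_nonneg hc0.le]; ring
    simp only [φ', inner_sub_left] at hinner ⊢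
    linarith
  have hφ10 : φ 1 ≤ φ 0 := by rw [hc] at hφ'c; simpa using hφ'c
  simp only [φ, one_smul, zero_smul, add_zero, one_mul, one_pow, zero_mul, zero_pow two_ne_zero,
    mul_zero, sub_zero] at hφ10
  linarith

theorem norm_gradient_sq_le_of_lipschitz {Fmin : ℝ} (hβ : 0 < β) (hdiff : Differentiable ℝ F)
    (hlip : ∀ x y, ‖gradient F x - gradient F y‖ ≤ β * ‖x - y‖) (hmin : ∀ x, Fmin ≤ F x)
    (x : E) : ‖gradient F x‖ ^ 2 ≤ 2 * β * (F x - Fmin) := by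
  have hstep : F (x - β⁻¹ • gradient F x) ≤ F x - ‖gradient F x‖ ^ 2 / (2 * β) := calc
    _ ≤ F x + ⟪gradient F x, -(β⁻¹ • gradient F x)⟫ + β / 2 * ‖-(β⁻¹ • gradient F x)‖ ^ 2 := by
      simpa only [sub_eq_add_neg] using
        le_add_inner_gradient_add_sq_of_lipschitz hdiff hlip x (-(β⁻¹ • gradient F x))
    _ = F x - ‖gradient F x‖ ^ 2 / (2 * β) := by
      rw [inner_neg_right, real_inner_smul_right, real_inner_self_eq_norm_sq, norm_neg,
        norm_smul, Real.norm_of_nonneg (inv_nonneg.mpr hβ.le)]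
      field_simp
      ring
  have hdiv : ‖gradient F x‖ ^ 2 / (2 * β) ≤ F x - Fmin := by
    linarith [hmin (x - β⁻¹ • gradient F x)]
  rwa [div_le_iff₀ (by positivity), mul_comm] at hdiv

end Smooth

section Conditional

variable {Ω E : Type*} {m m₀ : MeasurableSpace Ω} {μ : Measure Ω}
  [NormedAddCommGroup E] [InnerProductSpace ℝ E]

theorem integrable_inner_of_integrable_norm_sq {f g : Ω → E} (hf : AEStronglyMeasurable f μ)
    (hg : AEStronglyMeasurable g μ) (hf2 : Integrable (fun ω => ‖f ω‖ ^ 2) μ)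
    (hg2 : Integrable (fun ω => ‖g ω‖ ^ 2) μ) : Integrable (fun ω => ⟪f ω, g ω⟫) μ := by
  refine (hf2.add hg2).mono' (hf.inner hg) (ae_of_all _ fun ω => ?_)
  have hfg := abs_real_inner_le_norm (f ω) (g ω)
  rw [Real.norm_eq_abs, Pi.add_apply]
  nlinarith [sq_nonneg (‖f ω‖ - ‖g ω‖)]

variable [CompleteSpace E] {F : E → ℝ} {β : ℝ}

theorem condExp_comp_sub_smul_le (hm : m ≤ m₀) [SigmaFinite (μ.trim hm)]
    (hdiff : Differentiable ℝ F) (hlip : ∀ x y, ‖gradient F x - gradient F y‖ ≤ β * ‖x - y‖)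
    {X G : Ω → E} (α : ℝ) (hX : StronglyMeasurable[m] X) (hG : Integrable G μ)
    (hG2 : Integrable (fun ω => ‖G ω‖ ^ 2) μ) (hFX : Integrable (fun ω => F (X ω)) μ)
    (hFX' : Integrable (fun ω => F (X ω - α • G ω)) μ)
    (hgrad2 : Integrable (fun ω => ‖gradient F (X ω)‖ ^ 2) μ)
    (hmean : μ[G|m] =ᵐ[μ] fun ω => gradient F (X ω)) :
    μ[fun ω => F (X ω - α • G ω)|m] ≤ᵐ[μ] fun ω =>
      F (X ω) - α * ‖gradient F (X ω)‖ ^ 2 + β / 2 * α ^ 2 * μ[fun ω => ‖G ω‖ ^ 2|m] ω := by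
  have hgrad : StronglyMeasurable[m] fun ω => gradient F (X ω) :=
    (continuous_gradient_of_lipschitz hlip).comp_stronglyMeasurable hX
  have hinner : Integrable (fun ω => ⟪gradient F (X ω), G ω⟫) μ :=
    integrable_inner_of_integrable_norm_sq (hgrad.mono hm).aestronglyMeasurable
      hG.aestronglyMeasurable hgrad2 hG2
  set I : Ω → ℝ := fun ω => ⟪gradient F (X ω), G ω⟫
  set S : Ω → ℝ := fun ω => ‖G ω‖ ^ 2
  have hpull : μ[I|m] =ᵐ[μ] fun ω => ‖gradient F (X ω)‖ ^ 2 := by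
    have hout : μ[I|m] =ᵐ[μ] fun ω => ⟪gradient F (X ω), μ[G|m] ω⟫ :=
      condExp_bilin_of_stronglyMeasurable_left (innerSL ℝ) hgrad hinner hG
    filter_upwards [hout, hmean] with ω houtω hmeanω
    rw [houtω, hmeanω, real_inner_self_eq_norm_sq]
  have hdescent :
      (fun ω => F (X ω - α • G ω)) ≤ (fun ω => F (X ω)) - α • I + (β / 2 * α ^ 2) • S := by
    intro ω
    have hω := le_add_inner_gradient_add_sq_of_lipschitz hdiff hlip (X ω) (-(α • G ω))
    rw [← sub_eq_add_neg, inner_neg_right, real_inner_smul_right, norm_neg, norm_smul,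
      mul_pow, Real.norm_eq_abs, sq_abs] at hω
    simp only [Pi.add_apply, Pi.sub_apply, Pi.smul_apply, smul_eq_mul, I, S]
    linarith
  have hFXm : μ[fun ω => F (X ω)|m] = fun ω => F (X ω) :=
    condExp_of_stronglyMeasurable hm (hdiff.continuous.comp_stronglyMeasurable hX) hFX
  have hlin : μ[(fun ω => F (X ω)) - α • I + (β / 2 * α ^ 2) • S|m] =ᵐ[μ]
      (fun ω => F (X ω)) - α • μ[I|m] + (β / 2 * α ^ 2) • μ[S|m] := by
    have := (condExp_add (hFX.sub (hinner.smul α)) (hG2.smul (β / 2 * α ^ 2)) m).trans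
      (((condExp_sub hFX (hinner.smul α) m).trans (.sub .rfl (condExp_smul ..))).add
        (condExp_smul ..))
    rwa [hFXm] at this
  calc μ[fun ω => F (X ω - α • G ω)|m]
      ≤ᵐ[μ] μ[(fun ω => F (X ω)) - α • I + (β / 2 * α ^ 2) • S|m] :=
        condExp_mono hFX' ((hFX.sub (hinner.smul α)).add (hG2.smul _)) (ae_of_all _ hdescent)
    _ =ᵐ[μ] (fun ω => F (X ω)) - α • μ[I|m] + (β / 2 * α ^ 2) • μ[S|m] := hlin
    _ =ᵐ[μ] fun ω => F (X ω) - α * ‖gradient F (X ω)‖ ^ 2 + β / 2 * α ^ 2 * μ[S|m] ω := by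
      filter_upwards [hpull] with ω hpullω
      simp only [Pi.add_apply, Pi.sub_apply, Pi.smul_apply, smul_eq_mul, hpullω]

end Conditional

theorem stmt16_general {N : ℕ} {Ω : Type*} {m : MeasurableSpace Ω} (μ : Measure Ω)
    [IsProbabilityMeasure μ] (ℱ : Filtration ℕ m)
    (F : EuclideanSpace ℝ (Fin N) → ℝ) (β Fmin : ℝ) (hβ : 0 < β)
    (hdiff : Differentiable ℝ F)
    (hlip : ∀ x y, ‖gradient F x - gradient F y‖ ≤ β * ‖x - y‖)
    (hmin : ∀ x, Fmin ≤ F x)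
    (α a b c : ℕ → ℝ)
    (x g : ℕ → Ω → EuclideanSpace ℝ (Fin N))
    (hxadapt : Adapted ℱ x)
    (hupdate : ∀ k ω, x (k + 1) ω = x k ω - α k • g k ω)
    (hgint : ∀ k, Integrable (g k) μ)
    (hg2int : ∀ k, Integrable (fun ω => ‖g k ω‖ ^ 2) μ)
    (hFint : ∀ k, Integrable (fun ω => F (x k ω)) μ)
    (hmean : ∀ k, μ[g k|ℱ k] =ᵐ[μ] fun ω => gradient F (x k ω))
    (hvar : ∀ k, μ[fun ω => ‖g k ω‖ ^ 2|ℱ k] ≤ᵐ[μ]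
      fun ω => a k * (F (x k ω) - Fmin) + b k * ‖gradient F (x k ω)‖ ^ 2 + c k) :
    ∀ k, μ[fun ω => F (x (k + 1) ω)|ℱ k] ≤ᵐ[μ] fun ω =>
      Fmin + (1 + α k ^ 2 * a k * β / 2) * (F (x k ω) - Fmin)
        - α k * (1 - α k * b k * β / 2) * ‖gradient F (x k ω)‖ ^ 2
        + α k ^ 2 * c k * β / 2 := by
  intro k
  have hgrad2 : Integrable (fun ω => ‖gradient F (x k ω)‖ ^ 2) μ :=
    (((hFint k).sub (integrable_const Fmin)).const_mul (2 * β)).mono'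
      (((continuous_gradient_of_lipschitz hlip).comp_aestronglyMeasurable
        ((hxadapt k).stronglyMeasurable.mono (ℱ.le k)).aestronglyMeasurable).norm.pow 2)
      (ae_of_all _ fun ω => by
        simpa using norm_gradient_sq_le_of_lipschitz hβ hdiff hlip hmin (x k ω))
  simp only [hupdate]
  filter_upwards [condExp_comp_sub_smul_le (ℱ.le k) hdiff hlip (α k)
    (hxadapt k).stronglyMeasurable (hgint k) (hg2int k) (hFint k) (by simpa only [hupdate] using hFint (k + 1)) hgrad2 (hmean k),
    hvar k] with ω hdescent hvarω
  calc _ ≤ _ := hdescent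
    _ ≤ F (x k ω) - α k * ‖gradient F (x k ω)‖ ^ 2 + β / 2 * α k ^ 2 *
        (a k * (F (x k ω) - Fmin) + b k * ‖gradient F (x k ω)‖ ^ 2 + c k) := by
      gcongr
    _ = _ := by ring

theorem stmt16 {N : ℕ} {Ω : Type*} {m : MeasurableSpace Ω} (μ : Measure Ω)
    [IsProbabilityMeasure μ] (ℱ : Filtration ℕ m)
    (F : EuclideanSpace ℝ (Fin N) → ℝ) (β Fmin : ℝ) (hβ : 0 < β)
    (hdiff : Differentiable ℝ F)
    (hlip : ∀ x y, ‖gradient F x - gradient F y‖ ≤ β * ‖x - y‖)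
    (hmin : ∀ x, Fmin ≤ F x)
    (α a b c : ℕ → ℝ) (hα : ∀ k, 0 < α k)
    (ha : ∀ k, 0 ≤ a k) (hb : ∀ k, 0 ≤ b k) (hc : ∀ k, 0 ≤ c k)
    (x g : ℕ → Ω → EuclideanSpace ℝ (Fin N))
    (hxadapt : Adapted ℱ x)
    (hupdate : ∀ k ω, x (k + 1) ω = x k ω - α k • g k ω)
    (hgint : ∀ k, Integrable (g k) μ)
    (hg2int : ∀ k, Integrable (fun ω => ‖g k ω‖ ^ 2) μ)
    (hFint : ∀ k, Integrable (fun ω => F (x k ω)) μ)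
    (hmean : ∀ k, μ[g k|ℱ k] =ᵐ[μ] fun ω => gradient F (x k ω))
    (hvar : ∀ k, μ[fun ω => ‖g k ω‖ ^ 2|ℱ k] ≤ᵐ[μ]
      fun ω => a k * (F (x k ω) - Fmin) + b k * ‖gradient F (x k ω)‖ ^ 2 + c k) :
    ∀ k, μ[fun ω => F (x (k + 1) ω)|ℱ k] ≤ᵐ[μ] fun ω =>
      Fmin + (1 + α k ^ 2 * a k * β / 2) * (F (x k ω) - Fmin)
        - α k * (1 - α k * b k * β / 2) * ‖gradient F (x k ω)‖ ^ 2
        + α k ^ 2 * c k * β / 2 :=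
  stmt16_general μ ℱ F β Fmin hβ hdiff hlip hmin α a b c x g hxadapt hupdate hgint hg2int hFint
    hmean hvar
end
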